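/- Fix integers 1 ≤ ℓ < k with (k−ℓ) | n, fix ε ∈ (0,1), and suppose 0 ≤ p ≤ (1−ε)·e^{k−ℓ}/n^{k−ℓ}. Then the expected number X of hamperms of H_{n,p}^{(k)} satisfies E(X) = n!·p^{n/(k−ℓ)} ≤ 3√n · (n·p^{1/(k−ℓ)}/e)^n ≤ 3√n · (1−ε)^{n/(k−ℓ)}; in particular E(X) → 0 as n → ∞, so by Markov's inequality Pr(X > 0) → 0. -/

import Mathlib

open MeasureTheory Finset Filter Topology

/-- The sample space of the random `k`-uniform hypergraph on vertex set `Fin n`: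
a Boolean indicator for each `k`-element subset of the vertices. -/
abbrev HGraph (n k : ℕ) := {e : Finset (Fin n) // e.card = k} → Bool

/-- The distribution of `H_{n,p}^{(k)}`: the product over all `k`-subsets of
independent Bernoulli(p) coordinates. -/
noncomputable def hyperMeasure (n k : ℕ) (p : ℝ) : Measure (HGraph n k) :=
  Measure.pi fun _ => (PMF.bernoulli (min 1 (Real.toNNReal p)) (min_le_left _ _)).toMeasure

/-- `e` is an edge of the hypergraph `ω`. -/
def isEdge {n k : ℕ} (ω : HGraph n k) (e : Finset (Fin n)) : Prop :=
  ∃ h : e.card = k, ω ⟨e, h⟩ = true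

/-- The vertex of `Fin n` with index `a` modulo `n` (as a singleton finset, empty if `n = 0`). -/
def cvtx (n a : ℕ) : Finset (Fin n) :=
  if h : 0 < n then {⟨a % n, Nat.mod_lt a h⟩} else ∅

/-- The `i`-th edge `E_π(i) = {π(i·g + j) : j < k}` (positions mod `n`) of the cycle induced by
the permutation `π`, where `g = k - ℓ`. -/
def cycEdge (n k g : ℕ) (π : Equiv.Perm (Fin n)) (i : ℕ) : Finset (Fin n) :=
  (Finset.range k).biUnion fun j => (cvtx n (i * g + j)).image π

/-- `π` is an `ℓ`-overlapping Hamilton cycle inducing permutation for `ω`. -/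
def Hamperm (n k l : ℕ) (ω : HGraph n k) (π : Equiv.Perm (Fin n)) : Prop :=
  ∀ i < n / (k - l), isEdge ω (cycEdge n k (k - l) π i)

/-- `ω` contains an `ℓ`-overlapping Hamilton cycle. -/
def IsEllHamiltonian (n k l : ℕ) (ω : HGraph n k) : Prop :=
  ∃ π : Equiv.Perm (Fin n), Hamperm n k l ω π
/-- The number of hamperms of `ω` (the random variable `X`), as a real number. -/
noncomputable def countHamperms (n k l : ℕ) (ω : HGraph n k) : ℝ :=
  (Nat.card {π : Equiv.Perm (Fin n) // Hamperm n k l ω π} : ℝ)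

/-! `E X` is the sum over all `n!` permutations `π` of the probability that the `n/(k-ℓ)` sets
`E_π(i)` are all edges. They are distinct `k`-sets, since a window of `k < n` consecutive
positions mod `n` determines its start, so each probability is `p^{n/(k-ℓ)}`. Stirling's bound
`n! ≤ 3√n (n/e)^n` and `p^{1/(k-ℓ)} ≤ (1-ε)^{1/(k-ℓ)} e/n` give
`E X ≤ 3√n (1-ε)^{n/(k-ℓ)} → 0`, and the union bound gives `Pr(X > 0) ≤ E X`. -/

namespace Nat

theorem modEq_of_forall_exists_add_modEq_iff {n k s s' : ℕ} (hk : 0 < k) (hkn : k < n)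
    (h : ∀ y, (∃ j < k, s + j ≡ y [MOD n]) ↔ ∃ j < k, s' + j ≡ y [MOD n]) :
    s ≡ s' [MOD n] := by
  obtain ⟨j, hjk, hj⟩ := (h s).1 ⟨0, hk, rfl⟩
  rcases j with _ | j
  · exact hj.symm
  -- `s' + j ≡ s - 1` lies in the window of `s'`; the window of `s` only reaches `s - 1` by
  -- wrapping all the way around, which `k < n` rules out
  obtain ⟨j', hj'k, hj'⟩ := (h (s' + j)).2 ⟨j, by omega, rfl⟩
  have hwrap : s + (j' + 1) ≡ s + 0 [MOD n] :=
    calc s + (j' + 1) = s + j' + 1 := by ring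
      _ ≡ s' + j + 1 [MOD n] := hj'.add_right 1
      _ ≡ s + 0 [MOD n] := hj
  have hzero := ModEq.add_left_cancel' s hwrap
  rw [ModEq, Nat.mod_eq_of_lt (by omega), Nat.zero_mod] at hzero
  omega

end Nat

open scoped Nat

section CycleEdges

variable {n k g : ℕ} (π : Equiv.Perm (Fin n))

theorem cycEdge_eq_image (hn : 0 < n) (i : ℕ) :
    cycEdge n k g π i = (range k).image fun j => π ⟨(i * g + j) % n, Nat.mod_lt _ hn⟩ := by
  ext x
  simp [cycEdge, cvtx, hn, eq_comm]

theorem mem_cycEdge_iff_modEq (hn : 0 < n) (i y : ℕ) :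
    π ⟨y % n, Nat.mod_lt _ hn⟩ ∈ cycEdge n k g π i ↔ ∃ j < k, i * g + j ≡ y [MOD n] := by
  simp [cycEdge_eq_image π hn, Fin.ext_iff, Nat.ModEq]

theorem card_cycEdge (hkn : k ≤ n) (hk : 0 < k) (i : ℕ) : #(cycEdge n k g π i) = k := by
  rw [cycEdge_eq_image π (by omega), card_image_of_injOn, card_range]
  intro a ha b hb hab
  have hmod : i * g + a ≡ i * g + b [MOD n] := congrArg Fin.val (π.injective hab)
  exact (hmod.add_left_cancel' _).eq_of_lt_of_lt (by simp at ha; omega) (by simp at hb; omega)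

theorem cycEdge_injOn (hk : 0 < k) (hkn : k < n) (hg : 0 < g) :
    Set.InjOn (cycEdge n k g π) (Set.Iio (n / g)) := by
  intro i hi i' hi' h
  have hn : 0 < n := by omega
  have hstart : i * g ≡ i' * g [MOD n] := Nat.modEq_of_forall_exists_add_modEq_iff hk hkn
    fun y => by rw [← mem_cycEdge_iff_modEq π hn, ← mem_cycEdge_iff_modEq π hn, h]
  have hlt : ∀ {m}, m ∈ Set.Iio (n / g) → m * g < n := fun hm =>
    (Nat.mul_lt_mul_of_pos_right hm hg).trans_le (Nat.div_mul_le_self n g)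
  exact Nat.eq_of_mul_eq_mul_right hg (hstart.eq_of_lt_of_lt (hlt hi) (hlt hi'))

end CycleEdges

def cycEdges (n k g : ℕ) (π : Equiv.Perm (Fin n)) : Finset {e : Finset (Fin n) // e.card = k} :=
  ((range (n / g)).image (cycEdge n k g π)).subtype (·.card = k)

theorem hamperm_iff_forall_mem_cycEdges {n k l : ℕ} (hkn : k ≤ n) (hk : 0 < k)
    (ω : HGraph n k) (π : Equiv.Perm (Fin n)) :
    Hamperm n k l ω π ↔ ∀ e ∈ cycEdges n k (k - l) π, ω e = true := by
  simp only [Hamperm, isEdge, card_cycEdge π hkn hk, exists_true_left, cycEdges,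
    mem_subtype, mem_image, mem_range]
  constructor
  · rintro h ⟨e, he⟩ ⟨i, hi, rfl⟩
    exact h i hi
  · exact fun h i hi => h ⟨_, _⟩ ⟨i, hi, rfl⟩

theorem card_cycEdges {n k g : ℕ} (hk : 0 < k) (hkn : k < n) (hg : 0 < g)
    (π : Equiv.Perm (Fin n)) : #(cycEdges n k g π) = n / g := by
  rw [cycEdges, card_subtype, filter_true_of_mem, card_image_of_injOn, card_range]
  · simpa using cycEdge_injOn π hk hkn hg
  · simp [card_cycEdge π hkn.le hk]

instance (n k : ℕ) (p : ℝ) : IsProbabilityMeasure (hyperMeasure n k p) := by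
  unfold hyperMeasure; infer_instance

theorem hyperMeasure_forall_mem_true {n k : ℕ} {p : ℝ} (hp1 : p ≤ 1)
    (S : Finset {e : Finset (Fin n) // e.card = k}) :
    hyperMeasure n k p {ω | ∀ e ∈ S, ω e = true} = ENNReal.ofReal p ^ #S := by
  have hcyl : {ω : HGraph n k | ∀ e ∈ S, ω e = true} = (S : Set _).pi fun _ => {true} := by
    ext ω; simp
  rw [hcyl, hyperMeasure, Measure.pi_pi_finset, prod_const]
  simp [PMF.bernoulli_apply, Real.toNNReal_le_one.2 hp1, ENNReal.ofReal]

theorem hyperMeasure_hamperm {n k l : ℕ} {p : ℝ} (hlk : l < k) (hkn : k < n) (hp1 : p ≤ 1)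
    (π : Equiv.Perm (Fin n)) :
    hyperMeasure n k p {ω | Hamperm n k l ω π} = ENNReal.ofReal p ^ (n / (k - l)) := by
  simp_rw [hamperm_iff_forall_mem_cycEdges hkn.le (by omega : 0 < k)]
  rw [hyperMeasure_forall_mem_true hp1, card_cycEdges (by omega) hkn (by omega)]

theorem countHamperms_eq_sum_indicator (n k l : ℕ) (ω : HGraph n k) :
    countHamperms n k l ω = ∑ π, {ω | Hamperm n k l ω π}.indicator 1 ω := by
  classical
  rw [countHamperms, Nat.card_eq_fintype_card, Fintype.card_subtype, card_filter]
  push_cast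
  simp [Set.indicator_apply]

theorem integral_countHamperms {n k l : ℕ} {p : ℝ} (hlk : l < k) (hkn : k < n) (hp0 : 0 ≤ p)
    (hp1 : p ≤ 1) :
    ∫ ω, countHamperms n k l ω ∂hyperMeasure n k p = n ! * p ^ (n / (k - l)) := by
  have hmeas : ∀ π, MeasurableSet {ω : HGraph n k | Hamperm n k l ω π} :=
    fun _ => (Set.toFinite _).measurableSet
  simp_rw [countHamperms_eq_sum_indicator]
  rw [integral_finsetSum _ fun π _ => (integrable_const 1).indicator (hmeas π)]
  simp [integral_indicator_one (hmeas _), measureReal_def, hyperMeasure_hamperm hlk hkn hp1,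
    ENNReal.toReal_ofReal hp0, Fintype.card_perm]

theorem hyperMeasure_exists_hamperm_le {n k l : ℕ} {p : ℝ} (hlk : l < k) (hkn : k < n)
    (hp0 : 0 ≤ p) (hp1 : p ≤ 1) :
    hyperMeasure n k p {ω | ∃ π, Hamperm n k l ω π} ≤ ENNReal.ofReal (n ! * p ^ (n / (k - l))) :=
  calc hyperMeasure n k p {ω | ∃ π, Hamperm n k l ω π}
      ≤ ∑ π, hyperMeasure n k p {ω | Hamperm n k l ω π} := by
        rw [Set.setOf_exists]; exact measure_iUnion_fintype_le _ _
    _ = ENNReal.ofReal (n ! * p ^ (n / (k - l))) := by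
        simp [hyperMeasure_hamperm hlk hkn hp1, ENNReal.ofReal_mul, ENNReal.ofReal_pow hp0,
          Fintype.card_perm]

section RealBounds

open Real

theorem factorial_le_three_mul_sqrt_mul_div_exp_pow {n : ℕ} (hn : n ≠ 0) :
    (n ! : ℝ) ≤ 3 * √n * (n / exp 1) ^ n := by
  obtain ⟨m, rfl⟩ := Nat.exists_eq_succ_of_ne_zero hn
  -- `stirlingSeq` is antitone on positive integers and equals `e / √2` at `1`
  have hseq : Stirling.stirlingSeq (m + 1) ≤ exp 1 / √2 :=
    Stirling.stirlingSeq_one ▸ Stirling.stirlingSeq'_antitone (Nat.zero_le m)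
  rw [Stirling.stirlingSeq, div_le_iff₀ (by positivity), sqrt_mul zero_le_two] at hseq
  calc _ ≤ exp 1 / √2 * (√2 * √(m + 1 : ℕ) * ((m + 1 : ℕ) / exp 1) ^ (m + 1)) := hseq
    _ = exp 1 * √(m + 1 : ℕ) * ((m + 1 : ℕ) / exp 1) ^ (m + 1) := by field_simp
    _ ≤ 3 * √(m + 1 : ℕ) * ((m + 1 : ℕ) / exp 1) ^ (m + 1) := by
        gcongr
        exact exp_one_lt_d9.le.trans (by norm_num)

theorem rpow_one_div_natCast_pow_of_dvd {x : ℝ} (hx : 0 ≤ x) {g n : ℕ} (hd : g ∣ n) :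
    (x ^ (1 / g : ℝ)) ^ n = x ^ (n / g) := by
  obtain ⟨m, rfl⟩ := hd
  rcases Nat.eq_zero_or_pos g with rfl | hg
  · simp
  rw [pow_mul, one_div, rpow_inv_natCast_pow hx hg.ne', Nat.mul_div_cancel_left _ hg]

theorem factorial_mul_pow_le {p : ℝ} {g n : ℕ} (hn : n ≠ 0) (hp : 0 ≤ p) (hd : g ∣ n) :
    (n ! : ℝ) * p ^ (n / g) ≤ 3 * √n * (n * p ^ (1 / g : ℝ) / exp 1) ^ n := by
  rw [mul_div_right_comm, mul_pow, rpow_one_div_natCast_pow_of_dvd hp hd, ← mul_assoc]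
  gcongr
  exact factorial_le_three_mul_sqrt_mul_div_exp_pow hn

theorem le_one_of_le_mul_exp_pow_div {p ε : ℝ} {g n : ℕ} (hε : 0 ≤ ε) (hn : exp 1 ≤ n)
    (hp : p ≤ (1 - ε) * exp 1 ^ g / (n : ℝ) ^ g) : p ≤ 1 := by
  have hn0 : (0 : ℝ) < n := (exp_pos 1).trans_le hn
  calc p ≤ (1 - ε) * exp 1 ^ g / (n : ℝ) ^ g := hp
    _ ≤ exp 1 ^ g / (n : ℝ) ^ g := by
        gcongr ?_ / _
        exact mul_le_of_le_one_left (by positivity) (by linarith)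
    _ ≤ 1 := div_le_one_of_le₀ (by gcongr) (by positivity)

theorem mul_rpow_div_exp_pow_le {p ε : ℝ} {g n : ℕ} (hg : g ≠ 0) (hn : n ≠ 0) (hd : g ∣ n)
    (hp0 : 0 ≤ p) (hε : ε ≤ 1) (hp : p ≤ (1 - ε) * exp 1 ^ g / (n : ℝ) ^ g) :
    (n * p ^ (1 / g : ℝ) / exp 1) ^ n ≤ (1 - ε) ^ (n / g) := by
  rw [← rpow_one_div_natCast_pow_of_dvd (by linarith) hd]
  refine pow_le_pow_left₀ (by positivity) ?_ n
  -- compare `g`-th powers, where the roots disappear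
  refine (pow_le_pow_iff_left₀ (by positivity) (by positivity) hg).1 ?_
  rw [div_pow, mul_pow, one_div, rpow_inv_natCast_pow hp0 hg,
    rpow_inv_natCast_pow (by linarith) hg, div_le_iff₀ (by positivity), mul_comm,
    ← le_div_iff₀ (by positivity)]
  exact hp

theorem tendsto_three_mul_sqrt_mul_pow {c : ℝ} (hc0 : 0 ≤ c) (hc1 : c < 1) :
    Tendsto (fun n : ℕ => 3 * √n * c ^ n) atTop (𝓝 0) := by
  have hlin := (tendsto_self_mul_const_pow_of_lt_one hc0 hc1).const_mul 3
  rw [mul_zero] at hlin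
  refine squeeze_zero (fun n => by positivity) (fun n => ?_) hlin
  rw [← mul_assoc]
  gcongr
  exact sqrt_le_self_iff.2 (by rcases n with _ | n <;> simp)

end RealBounds

/-- For `1 ≤ ℓ < k` with `(k-ℓ) ∣ n`, `ε ∈ (0,1)` and
`0 ≤ p ≤ (1-ε)·e^{k-ℓ}/n^{k-ℓ}`: the expected number of hamperms satisfies
`E(X) = n!·p^{n/(k-ℓ)} ≤ 3√n·(n·p^{1/(k-ℓ)}/e)^n ≤ 3√n·(1-ε)^{n/(k-ℓ)}`; in particular
`E(X) → 0`, so by Markov's inequality `Pr(X > 0) → 0`. -/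
theorem statement_9 (k l : ℕ) (hl : 1 ≤ l) (hlk : l < k)
    (ε : ℝ) (hε0 : 0 < ε) (hε1 : ε < 1)
    (p : ℕ → ℝ) (hp0 : ∀ n, 0 ≤ p n)
    (hpu : ∀ n : ℕ, p n ≤ (1 - ε) * Real.exp 1 ^ (k - l) / (n : ℝ) ^ (k - l)) :
    (∀ n : ℕ, (k - l) ∣ n → k < n →
      (∫ ω, countHamperms n k l ω ∂hyperMeasure n k (p n)) =
          (Nat.factorial n : ℝ) * p n ^ (n / (k - l)) ∧
      (Nat.factorial n : ℝ) * p n ^ (n / (k - l)) ≤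
          3 * Real.sqrt n * ((n : ℝ) * p n ^ ((1 : ℝ) / (k - l)) / Real.exp 1) ^ n ∧
      3 * Real.sqrt n * ((n : ℝ) * p n ^ ((1 : ℝ) / (k - l)) / Real.exp 1) ^ n ≤
          3 * Real.sqrt n * (1 - ε) ^ (n / (k - l))) ∧
    Tendsto (fun n => hyperMeasure n k (p n) {ω | ∃ π, Hamperm n k l ω π})
      (atTop ⊓ 𝓟 {n | (k - l) ∣ n}) (𝓝 0) := by
  rw [← Nat.cast_sub hlk.le]
  have hg : k - l ≠ 0 := by omega
  have hε : 0 ≤ 1 - ε := by linarith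
  have hp1 : ∀ n, k < n → p n ≤ 1 := by
    intro n hkn
    have hn3 : (3 : ℝ) ≤ n := by exact_mod_cast (by omega : 3 ≤ n)
    exact le_one_of_le_mul_exp_pow_div hε0.le (by linarith [Real.exp_one_lt_d9]) (hpu n)
  have hroot : ∀ n : ℕ, (k - l) ∣ n → k < n →
      3 * √n * (n * p n ^ (1 / (k - l : ℕ) : ℝ) / Real.exp 1) ^ n ≤
        3 * √n * (1 - ε) ^ (n / (k - l)) := by
    intro n hd hkn
    gcongr
    exact mul_rpow_div_exp_pow_le hg (by omega) hd (hp0 n) hε1.le (hpu n)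
  refine ⟨fun n hd hkn => ⟨integral_countHamperms hlk hkn (hp0 n) (hp1 n hkn),
    factorial_mul_pow_le (by omega) (hp0 n) hd, hroot n hd hkn⟩, ?_⟩
  set c := (1 - ε) ^ (1 / (k - l : ℕ) : ℝ)
  have hc : Tendsto (fun n : ℕ => ENNReal.ofReal (3 * √n * c ^ n)) atTop (𝓝 0) := by
    simpa using ENNReal.tendsto_ofReal (tendsto_three_mul_sqrt_mul_pow (c := c) (by positivity)
      (Real.rpow_lt_one hε (by linarith) (by positivity)))
  refine tendsto_of_tendsto_of_tendsto_of_le_of_le' tendsto_const_nhds (hc.mono_left inf_le_left)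
    (.of_forall fun _ => zero_le) ?_
  filter_upwards [(eventually_gt_atTop k).filter_mono inf_le_left,
    eventually_inf_principal.2 (.of_forall fun _ hd => hd)] with n hkn hd
  refine (hyperMeasure_exists_hamperm_le hlk hkn (hp0 n) (hp1 n hkn)).trans
    (ENNReal.ofReal_le_ofReal ?_)
  rw [rpow_one_div_natCast_pow_of_dvd hε hd]
  exact (factorial_mul_pow_le (by omega) (hp0 n) hd).trans (hroot n hd hkn)
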